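/- arXiv:2209.14618 — 2 statements merged into one kernel-verified Lean document; each statement's English description precedes it below -/
import Mathlib

section
/- Suppose f : [0,∞)^d → [0,∞) is such that for every r > 0 the function z ↦ F(z,r) on ℕ^d is finite and not constant, and for every z ∈ ℕ^d and every r > 0 one has Σ_{i=1}^d z_i (F(z,r) − F(z−δ_i,r)) + Σ_{i=1}^d (z_i + 1/2)(F(z,r) − F(z+δ_i,r)) ≥ 0. Then for every λ ∈ (0,∞)^d, the Kullback–Leibler estimation risk of the Bayes estimator λ̂^{f}(x) = ((x_i + 1/2)/r · F(x+δ_i,r)/F(x,r))_{i=1,…,d} is strictly smaller than the Kullback–Leibler estimation risk of the Jeffreys Bayes estimator λ̂^{J}(x) = ((x_i + 1/2)/r)_{i=1,…,d}. -/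
open MeasureTheory Real Filter

noncomputable section

/-- The positive orthant `(0,∞)^d`. -/
def posOrthant (d : ℕ) : Set (Fin d → ℝ) := {lam | ∀ i, 0 < lam i}

/-- Poisson probability mass function with mean `μ`. -/
noncomputable def poissonPMF (μ : ℝ) (k : ℕ) : ℝ :=
  Real.exp (-μ) * μ ^ k / (Nat.factorial k)

/-- Kullback–Leibler estimation risk of an estimator `est` at parameter `lam`. -/
noncomputable def estRisk {d : ℕ} (r : ℝ) (lam : Fin d → ℝ)
    (est : (Fin d → ℕ) → Fin d → ℝ) : ℝ :=
  ∑' x : Fin d → ℕ,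
    (∑ i, (r * lam i * Real.log (lam i / est x i) - r * lam i + r * est x i)) *
      ∏ i, poissonPMF (r * lam i) (x i)

/-- The integrand of `F(z,r)` in the Jeffreys case (β_i = 1/2). -/
noncomputable def FintegrandJ {d : ℕ} (f : (Fin d → ℝ) → ℝ)
    (z : Fin d → ℕ) (r : ℝ) (lam : Fin d → ℝ) : ℝ :=
  f (fun i => Real.sqrt (lam i)) *
    ∏ i, r ^ ((z i : ℝ) + 1/2) * lam i ^ ((z i : ℝ) - 1/2) * Real.exp (-(r * lam i)) /
      Real.Gamma ((z i : ℝ) + 1/2)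

/-- `F(z,r) = ∫ f(√λ) ∏ r^{z_i+1/2} λ_i^{z_i-1/2} e^{-rλ_i}/Γ(z_i+1/2) dλ`. -/
noncomputable def FfunJ {d : ℕ} (f : (Fin d → ℝ) → ℝ)
    (z : Fin d → ℕ) (r : ℝ) : ℝ :=
  ∫ lam in posOrthant d, FintegrandJ f z r lam

/-- `F(z - δ_i, r)` with the convention that it equals `1` when `z i = 0`. -/
noncomputable def FfunJDown {d : ℕ} (f : (Fin d → ℝ) → ℝ)
    (z : Fin d → ℕ) (r : ℝ) (i : Fin d) : ℝ :=
  if z i = 0 then 1 else FfunJ f (Function.update z i (z i - 1)) r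

/-!
Write `μ i = r λ i`, `P` for the product Poisson mass, `ρ_i(x) = F(x+δ_i)/F(x)`. Coordinatewise,
the Jeffreys risk minus the risk of `λ̂^f` is `Σ_x [μ_i log ρ_i(x) - (x_i + 1/2)(ρ_i(x) - 1)] P(x)`.
The Poisson identity `(x_i + 1) P(x + δ_i) = μ_i P(x)` turns the logarithmic part into
`Σ_x x_i log (F(x)/F(x - δ_i)) P(x)`, and `log t ≥ 1 - 1/t` bounds the resulting density below by
the assumed nonnegative expression divided by `F(x)`, strictly at a point where `F` changes along
a coordinate; such a point exists because `F` is not constant. When the risk series of `λ̂^f`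
diverges its `tsum` is `0`, below the positive Jeffreys risk.
-/

open Function Finset InformationTheory

lemma poissonPMF_pos {μ : ℝ} (hμ : 0 < μ) (k : ℕ) : 0 < poissonPMF μ k := by
  unfold poissonPMF; positivity

lemma summable_poissonPMF (μ : ℝ) : Summable (poissonPMF μ) :=
  ((summable_pow_div_factorial μ).mul_left (exp (-μ))).congr fun k => by
    simp only [poissonPMF, mul_div_assoc]

lemma succ_mul_poissonPMF_succ (μ : ℝ) (k : ℕ) :
    ((k : ℝ) + 1) * poissonPMF μ (k + 1) = μ * poissonPMF μ k := by
  simp only [poissonPMF, Nat.factorial_succ, pow_succ, Nat.cast_mul, Nat.cast_succ]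
  field_simp

lemma summable_prod_apply_of_nonneg {d : ℕ} (q : Fin d → ℕ → ℝ) (hq : ∀ i, Summable (q i))
    (hq₀ : ∀ i k, 0 ≤ q i k) : Summable fun x : Fin d → ℕ => ∏ i, q i (x i) := by
  induction d with
  | zero => exact Summable.of_finite
  | succ n ih =>
    have htail := ih (fun i => q i.succ) (fun i => hq i.succ) fun i => hq₀ i.succ
    have hpair := (hq 0).mul_of_nonneg htail (hq₀ 0) fun y =>
      prod_nonneg fun i _ => hq₀ i.succ (y i)
    refine (Equiv.summable_iff (Fin.consEquiv fun _ => ℕ)).mp (hpair.congr fun p => ?_)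
    simp [Fin.prod_univ_succ]

lemma update_succ_injective {ι : Type*} [DecidableEq ι] (i : ι) :
    Injective fun x : ι → ℕ => update x i (x i + 1) := by
  intro x y h
  funext j
  have hj := congrFun h j
  by_cases hji : j = i
  · subst hji; simpa using hj
  · simpa [hji] using hj

lemma hasSum_comp_update_succ_iff {ι α : Type*} [DecidableEq ι] [AddCommMonoid α]
    [TopologicalSpace α] {g : (ι → ℕ) → α} {s : α} (i : ι) (hg : ∀ y, y i = 0 → g y = 0) :
    HasSum (fun x => g (update x i (x i + 1))) s ↔ HasSum g s := by
  refine (update_succ_injective i).hasSum_iff fun y hy => hg y ?_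
  by_contra hyi
  exact hy ⟨update y i (y i - 1), by simp [Nat.sub_add_cancel (Nat.one_le_iff_ne_zero.mpr hyi)]⟩

lemma exists_update_pred_ne {ι α : Type*} [Finite ι] [DecidableEq ι] {g : (ι → ℕ) → α}
    (h : ∃ z₁ z₂, g z₁ ≠ g z₂) : ∃ y i, y i ≠ 0 ∧ g (update y i (y i - 1)) ≠ g y := by
  by_contra! hcon
  have hconst (z : ι → ℕ) : g z = g 0 := by
    induction z using WellFoundedLT.induction with | _ y ih
    by_cases hy : y = 0
    · rw [hy]
    obtain ⟨i, hi⟩ : ∃ i, y i ≠ 0 := by contrapose! hy; exact funext hy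
    rw [← hcon y i hi, ih _ (update_lt_self_iff.2 (by omega))]
  obtain ⟨z₁, z₂, hne⟩ := h
  exact hne (by rw [hconst z₁, hconst z₂])

def poissonProd {d : ℕ} (μ : Fin d → ℝ) (x : Fin d → ℕ) : ℝ := ∏ i, poissonPMF (μ i) (x i)

section PoissonProd

variable {d : ℕ} {μ : Fin d → ℝ}

lemma poissonProd_pos (hμ : ∀ i, 0 < μ i) (x : Fin d → ℕ) : 0 < poissonProd μ x :=
  prod_pos fun i _ => poissonPMF_pos (hμ i) (x i)

lemma summable_poissonProd (hμ : ∀ i, 0 < μ i) : Summable (poissonProd μ) :=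
  summable_prod_apply_of_nonneg _ (fun _ => summable_poissonPMF _) fun i k =>
    (poissonPMF_pos (hμ i) k).le

lemma succ_mul_poissonProd_update (x : Fin d → ℕ) (i : Fin d) :
    ((x i : ℝ) + 1) * poissonProd μ (update x i (x i + 1)) = μ i * poissonProd μ x := by
  simp only [poissonProd, apply_update (fun j k => poissonPMF (μ j) k),
    prod_update_of_mem (mem_univ i), ← mul_assoc, succ_mul_poissonPMF_succ]
  rw [prod_eq_mul_prod_sdiff_singleton_of_mem (mem_univ i) fun k => poissonPMF (μ k) (x k),
    mul_assoc]

lemma summable_coord_mul_poissonProd (hμ : ∀ i, 0 < μ i) (i : Fin d) :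
    Summable fun x : Fin d → ℕ => (x i : ℝ) * poissonProd μ x := by
  obtain ⟨s, hs⟩ := (summable_poissonProd hμ).mul_left (μ i)
  refine ⟨s, (hasSum_comp_update_succ_iff i fun y hy => by simp [hy]).mp ?_⟩
  simpa only [update_self, Nat.cast_succ, succ_mul_poissonProd_update] using hs

end PoissonProd

def poissonKL (a b : ℝ) : ℝ := a * log (a / b) - a + b

section PoissonKL

variable {a b : ℝ}

lemma poissonKL_eq_mul_klFun (hb : 0 < b) : poissonKL a b = b * klFun (a / b) := by
  rw [poissonKL, klFun]
  field_simp
  ring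

lemma poissonKL_nonneg (ha : 0 ≤ a) (hb : 0 < b) : 0 ≤ poissonKL a b := by
  rw [poissonKL_eq_mul_klFun hb]
  exact mul_nonneg hb.le (klFun_nonneg (div_nonneg ha hb.le))

lemma poissonKL_pos (ha : 0 ≤ a) (hb : 0 < b) (hab : a ≠ b) : 0 < poissonKL a b := by
  rw [poissonKL_eq_mul_klFun hb]
  refine mul_pos hb ((klFun_nonneg (div_nonneg ha hb.le)).lt_of_ne' ?_)
  rwa [Ne, klFun_eq_zero_iff (div_nonneg ha hb.le), div_eq_one_iff_eq hb.ne']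

lemma poissonKL_le (ha : 0 < a) (hb : 1 / 2 ≤ b) : poissonKL a b ≤ a * log (2 * a) + b := by
  have hlog : log (a / b) ≤ log (2 * a) :=
    log_le_log (by positivity) (by rw [div_le_iff₀ (by linarith)]; nlinarith)
  unfold poissonKL
  nlinarith [mul_le_mul_of_nonneg_left hlog ha.le]

lemma le_two_mul_poissonKL (ha : 0 < a) (hb : 0 < b) : b ≤ 2 * poissonKL a b + 2 * a * log 2 := by
  have h := poissonKL_nonneg ha.le (half_pos hb)
  rw [poissonKL, show a / (b / 2) = a / b * 2 by ring, log_mul (by positivity) two_ne_zero,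
    mul_add] at h
  unfold poissonKL
  linarith

lemma poissonKL_sub_poissonKL_mul {ρ : ℝ} (ha : a ≠ 0) (hb : b ≠ 0) (hρ : ρ ≠ 0) :
    poissonKL a b - poissonKL a (b * ρ) = a * log ρ - b * (ρ - 1) := by
  rw [poissonKL, poissonKL, ← div_div, log_div (div_ne_zero ha hb) hρ]
  ring

end PoissonKL

lemma one_sub_inv_lt_log_of_pos {x : ℝ} (hx : 0 < x) (hx₁ : x ≠ 1) : 1 - x⁻¹ < log x := by
  have h := log_lt_sub_one_of_pos (inv_pos.2 hx) (inv_ne_one.2 hx₁)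
  rw [log_inv] at h
  linarith

section RiskGain

variable {d : ℕ} (G : (Fin d → ℕ) → ℝ)

/-- The generator of the birth–death chain on `ℕ^d` in which coordinate `i` of `z` is born at rate
`z i + 1/2` and dies at rate `z i`; at `z i = 0` the truncated `z i - 1` is harmless. -/
def birthDeathGenerator (z : Fin d → ℕ) : ℝ :=
  ∑ i, (((z i : ℝ) + 1 / 2) * (G (update z i (z i + 1)) - G z)
    + (z i : ℝ) * (G (update z i (z i - 1)) - G z))

/-- `r` times the Bayes estimator of the theorem, the Poisson means being `μ = r λ`. -/
def ratioMean (x : Fin d → ℕ) (i : Fin d) : ℝ :=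
  ((x i : ℝ) + 1 / 2) * (G (update x i (x i + 1)) / G x)

/-- After the Poisson shift, the density with respect to `poissonProd μ` of the risk gain of
`ratioMean G` over the Jeffreys mean along coordinate `i`. -/
def riskGain (i : Fin d) (y : Fin d → ℕ) : ℝ :=
  (y i : ℝ) * log (G y / G (update y i (y i - 1)))
    - ((y i : ℝ) + 1 / 2) * (G (update y i (y i + 1)) / G y - 1)

variable {G} (hG : ∀ z, 0 < G z)
include hG

lemma sum_riskGain_eq (y : Fin d → ℕ) :
    ∑ i, riskGain G i y = -birthDeathGenerator G y / G y
      + ∑ i, (y i : ℝ) * (log (G y / G (update y i (y i - 1)))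
        - (1 - (G y / G (update y i (y i - 1)))⁻¹)) := by
  rw [birthDeathGenerator, ← sum_neg_distrib, sum_div, ← sum_add_distrib]
  refine sum_congr rfl fun i _ => ?_
  have := hG y
  have := hG (update y i (y i - 1))
  rw [riskGain]
  field_simp
  ring

lemma sum_riskGain_nonneg {y : Fin d → ℕ} (hgen : birthDeathGenerator G y ≤ 0) :
    0 ≤ ∑ i, riskGain G i y := by
  rw [sum_riskGain_eq hG]
  exact add_nonneg (div_nonneg (neg_nonneg.2 hgen) (hG y).le) (sum_nonneg fun i _ =>
    mul_nonneg (Nat.cast_nonneg _)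
      (sub_nonneg.2 (one_sub_inv_le_log_of_pos (div_pos (hG _) (hG _)))))

lemma sum_riskGain_pos {y : Fin d → ℕ} (hgen : birthDeathGenerator G y ≤ 0) {i : Fin d}
    (hi : y i ≠ 0) (hne : G (update y i (y i - 1)) ≠ G y) : 0 < ∑ i, riskGain G i y := by
  rw [sum_riskGain_eq hG]
  have hlog (j : Fin d) : 1 - (G y / G (update y j (y j - 1)))⁻¹
      ≤ log (G y / G (update y j (y j - 1))) :=
    one_sub_inv_le_log_of_pos (div_pos (hG _) (hG _))
  refine add_pos_of_nonneg_of_pos (div_nonneg (neg_nonneg.2 hgen) (hG y).le)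
    (sum_pos' (fun j _ => mul_nonneg (Nat.cast_nonneg _) (sub_nonneg.2 (hlog j)))
      ⟨i, mem_univ i, mul_pos (Nat.cast_pos.2 (Nat.pos_of_ne_zero hi)) (sub_pos.2 ?_)⟩)
  refine one_sub_inv_lt_log_of_pos (div_pos (hG _) (hG _)) ?_
  rwa [Ne, div_eq_one_iff_eq (hG _).ne', eq_comm]

end RiskGain

def klRisk {d : ℕ} (μ : Fin d → ℝ) (m : (Fin d → ℕ) → Fin d → ℝ) : ℝ :=
  ∑' x, (∑ i, poissonKL (μ i) (m x i)) * poissonProd μ x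

lemma estRisk_div_eq_klRisk {d : ℕ} {r : ℝ} (hr : r ≠ 0) (lam : Fin d → ℝ)
    (m : (Fin d → ℕ) → Fin d → ℝ) :
    estRisk r lam (fun x i => m x i / r) = klRisk (fun i => r * lam i) m := by
  refine tsum_congr fun x => ?_
  congr 1
  refine sum_congr rfl fun i _ => ?_
  rw [poissonKL, div_div_eq_mul_div, mul_div_cancel₀ _ hr, mul_comm (lam i) r]

section KLRisk

variable {d : ℕ} {μ : Fin d → ℝ} (hμ : ∀ i, 0 < μ i)
include hμ

lemma summable_poissonKL_jeffreys_mul (i : Fin d) :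
    Summable fun x : Fin d → ℕ => poissonKL (μ i) ((x i : ℝ) + 1 / 2) * poissonProd μ x := by
  refine (((summable_poissonProd hμ).mul_left (μ i * log (2 * μ i) + 1 / 2)).add
    (summable_coord_mul_poissonProd hμ i)).of_nonneg_of_le
    (fun x => mul_nonneg (poissonKL_nonneg (hμ i).le (by positivity)) (poissonProd_pos hμ x).le)
    fun x => ?_
  calc _ ≤ (μ i * log (2 * μ i) + ((x i : ℝ) + 1 / 2)) * poissonProd μ x :=
        mul_le_mul_of_nonneg_right (poissonKL_le (hμ i) (by simp)) (poissonProd_pos hμ x).le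
    _ = _ := by ring

lemma klRisk_jeffreys_pos (i : Fin d) : 0 < klRisk μ fun x i => (x i : ℝ) + 1 / 2 := by
  obtain ⟨k, hk⟩ : ∃ k : ℕ, (k : ℝ) + 1 / 2 ≠ μ i := by
    by_contra! h
    linarith [h 0, h 1]
  have hnonneg (x : Fin d → ℕ) (j : Fin d) : 0 ≤ poissonKL (μ j) ((x j : ℝ) + 1 / 2) :=
    poissonKL_nonneg (hμ j).le (by positivity)
  unfold klRisk
  refine Summable.tsum_pos ?_ (fun x => mul_nonneg (sum_nonneg fun j _ => hnonneg x j)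
    (poissonProd_pos hμ x).le) (fun _ => k) (mul_pos ?_ (poissonProd_pos hμ _))
  · simpa only [sum_mul] using summable_sum fun i _ => summable_poissonKL_jeffreys_mul hμ i
  · exact sum_pos' (fun j _ => hnonneg (fun _ => k) j)
      ⟨i, mem_univ i, poissonKL_pos (hμ i).le (by positivity) hk.symm⟩

variable {G : (Fin d → ℕ) → ℝ} (hG : ∀ z, 0 < G z)
include hG

lemma hasSum_riskGain_mul (i : Fin d)
    (hsum : Summable fun x => poissonKL (μ i) (ratioMean G x i) * poissonProd μ x) :
    HasSum (fun y => riskGain G i y * poissonProd μ y)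
      ((∑' x, poissonKL (μ i) ((x i : ℝ) + 1 / 2) * poissonProd μ x)
        - ∑' x, poissonKL (μ i) (ratioMean G x i) * poissonProd μ x) := by
  have hP := summable_poissonProd hμ
  have hρ (x : Fin d → ℕ) : 0 < G (update x i (x i + 1)) / G x := div_pos (hG _) (hG _)
  have hmean (x : Fin d → ℕ) : 0 < ratioMean G x i := mul_pos (by positivity) (hρ x)
  have hmeanP : Summable fun x => ratioMean G x i * poissonProd μ x := by
    refine ((hsum.mul_left 2).add (hP.mul_left (2 * μ i * log 2))).of_nonneg_of_le
      (fun x => (mul_pos (hmean x) (poissonProd_pos hμ x)).le) fun x => ?_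
    calc _ ≤ (2 * poissonKL (μ i) (ratioMean G x i) + 2 * μ i * log 2) * poissonProd μ x :=
          mul_le_mul_of_nonneg_right (le_two_mul_poissonKL (hμ i) (hmean x))
            (poissonProd_pos hμ x).le
      _ = _ := by ring
  have hQ : Summable fun x =>
      ((x i : ℝ) + 1 / 2) * (G (update x i (x i + 1)) / G x - 1) * poissonProd μ x :=
    (hmeanP.sub ((summable_coord_mul_poissonProd hμ i).add (hP.mul_left (1 / 2)))).congr
      fun x => by rw [ratioMean]; ring
  have hlog := (((summable_poissonKL_jeffreys_mul hμ i).hasSum.sub hsum.hasSum).add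
    hQ.hasSum).congr_fun fun x =>
      show μ i * log (G (update x i (x i + 1)) / G x) * poissonProd μ x = _ by
        have := poissonKL_sub_poissonKL_mul (hμ i).ne' (by positivity : (x i : ℝ) + 1 / 2 ≠ 0)
          (hρ x).ne'
        rw [ratioMean]
        linear_combination -poissonProd μ x * this
  have hshift := (hasSum_comp_update_succ_iff (g := fun y =>
      (y i : ℝ) * log (G y / G (update y i (y i - 1))) * poissonProd μ y) i
      fun y hy => by simp [hy]).mp (hlog.congr_fun fun x => by
    simp only [update_self, Nat.add_sub_cancel, update_idem, update_eq_self, Nat.cast_succ]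
    rw [mul_right_comm, succ_mul_poissonProd_update]
    ring)
  have h := (hshift.sub hQ.hasSum).congr_fun fun y =>
    show riskGain G i y * poissonProd μ y = _ by rw [riskGain]; ring
  rwa [add_sub_cancel_right] at h

lemma hasSum_sum_riskGain_mul
    (hsum : Summable fun x => (∑ i, poissonKL (μ i) (ratioMean G x i)) * poissonProd μ x) :
    HasSum (fun y => (∑ i, riskGain G i y) * poissonProd μ y)
      (klRisk μ (fun x i => (x i : ℝ) + 1 / 2) - klRisk μ (ratioMean G)) := by
  have hnonneg (x : Fin d → ℕ) (j : Fin d) :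
      0 ≤ poissonKL (μ j) (ratioMean G x j) * poissonProd μ x :=
    mul_nonneg (poissonKL_nonneg (hμ j).le (mul_pos (by positivity) (div_pos (hG _) (hG _))))
      (poissonProd_pos hμ x).le
  have hcoord (i : Fin d) :
      Summable fun x => poissonKL (μ i) (ratioMean G x i) * poissonProd μ x :=
    hsum.of_nonneg_of_le (fun x => hnonneg x i) fun x => by
      rw [sum_mul]
      exact single_le_sum (f := fun j => poissonKL (μ j) (ratioMean G x j) * poissonProd μ x)
        (fun j _ => hnonneg x j) (mem_univ i)
  have h := hasSum_sum (s := univ) fun i _ => hasSum_riskGain_mul hμ hG i (hcoord i)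
  rw [sum_sub_distrib,
    ← Summable.tsum_finsetSum fun i _ => summable_poissonKL_jeffreys_mul hμ i,
    ← Summable.tsum_finsetSum fun i _ => hcoord i] at h
  simpa only [klRisk, sum_mul] using h

theorem klRisk_ratioMean_lt_jeffreys (hgen : ∀ z, birthDeathGenerator G z ≤ 0)
    (hnc : ∃ z₁ z₂, G z₁ ≠ G z₂) :
    klRisk μ (ratioMean G) < klRisk μ fun x i => (x i : ℝ) + 1 / 2 := by
  obtain ⟨y, i, hi, hne⟩ := exists_update_pred_ne hnc
  by_cases hsum : Summable fun x => (∑ i, poissonKL (μ i) (ratioMean G x i)) * poissonProd μ x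
  · have hgap := hasSum_lt (f := fun _ => 0)
      (fun z => mul_nonneg (sum_riskGain_nonneg hG (hgen z)) (poissonProd_pos hμ z).le)
      (mul_pos (sum_riskGain_pos hG (hgen y) hi hne) (poissonProd_pos hμ y))
      hasSum_zero (hasSum_sum_riskGain_mul hμ hG hsum)
    linarith
  · rw [klRisk, tsum_eq_zero_of_not_summable hsum]
    exact klRisk_jeffreys_pos hμ i

end KLRisk

section Jeffreys

variable {d : ℕ} {f : (Fin d → ℝ) → ℝ} {r : ℝ}

lemma measurableSet_posOrthant (d : ℕ) : MeasurableSet (posOrthant d) := by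
  have h : posOrthant d = Set.univ.pi fun _ => Set.Ioi 0 := by
    ext
    simp [posOrthant]
  exact h ▸ MeasurableSet.univ_pi fun _ => measurableSet_Ioi

lemma FintegrandJ_eq_zero_iff (hr : 0 < r) (z : Fin d → ℕ) {lam : Fin d → ℝ}
    (hlam : lam ∈ posOrthant d) :
    FintegrandJ f z r lam = 0 ↔ f (fun i => √(lam i)) = 0 := by
  have hweight : 0 < ∏ i, r ^ ((z i : ℝ) + 1 / 2) * lam i ^ ((z i : ℝ) - 1 / 2)
      * exp (-(r * lam i)) / Gamma ((z i : ℝ) + 1 / 2) :=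
    prod_pos fun i _ => by have := hlam i; positivity
  rw [FintegrandJ, mul_eq_zero, or_iff_left hweight.ne']

lemma FintegrandJ_nonneg (hf : ∀ θ, 0 ≤ f θ) (hr : 0 < r) (z : Fin d → ℕ) {lam : Fin d → ℝ}
    (hlam : lam ∈ posOrthant d) : 0 ≤ FintegrandJ f z r lam :=
  mul_nonneg (hf _) (prod_nonneg fun i _ => by have := hlam i; positivity)

lemma FfunJ_eq_zero_of_eq_zero (hf : ∀ θ, 0 ≤ f θ) (hr : 0 < r) {z : Fin d → ℕ}
    (hint : IntegrableOn (FintegrandJ f z r) (posOrthant d)) (hz : FfunJ f z r = 0)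
    (z' : Fin d → ℕ) : FfunJ f z' r = 0 := by
  have hmeas := measurableSet_posOrthant d
  have hzero := (integral_eq_zero_iff_of_nonneg_ae
    (ae_restrict_of_forall_mem hmeas fun _ => FintegrandJ_nonneg hf hr z) hint).mp hz
  refine integral_eq_zero_of_ae ?_
  filter_upwards [hzero, ae_restrict_mem hmeas] with lam h hlam
  exact (FintegrandJ_eq_zero_iff hr z' hlam).2 ((FintegrandJ_eq_zero_iff hr z hlam).1 h)

lemma FfunJ_pos (hf : ∀ θ, 0 ≤ f θ) (hr : 0 < r)
    (hint : ∀ z, IntegrableOn (FintegrandJ f z r) (posOrthant d))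
    (hnc : ∃ z₁ z₂ : Fin d → ℕ, FfunJ f z₁ r ≠ FfunJ f z₂ r) (z : Fin d → ℕ) :
    0 < FfunJ f z r := by
  refine (setIntegral_nonneg (measurableSet_posOrthant d)
    fun _ => FintegrandJ_nonneg hf hr z).lt_of_ne' fun hz => ?_
  obtain ⟨z₁, z₂, hne⟩ := hnc
  exact hne (by rw [FfunJ_eq_zero_of_eq_zero hf hr (hint z) hz z₁,
    FfunJ_eq_zero_of_eq_zero hf hr (hint z) hz z₂])

end Jeffreys

lemma sum_FfunJDown_add_sum_eq_neg_birthDeathGenerator {d : ℕ} (f : (Fin d → ℝ) → ℝ) (r : ℝ)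
    (z : Fin d → ℕ) :
    ∑ i, (z i : ℝ) * (FfunJ f z r - FfunJDown f z r i) +
        ∑ i, ((z i : ℝ) + 1 / 2) * (FfunJ f z r - FfunJ f (update z i (z i + 1)) r)
      = -birthDeathGenerator (fun z => FfunJ f z r) z := by
  rw [birthDeathGenerator, ← sum_add_distrib, ← sum_neg_distrib]
  refine sum_congr rfl fun i _ => ?_
  by_cases hi : z i = 0
  · simp only [FfunJDown, hi, if_true, Nat.cast_zero]
    ring
  · simp only [FfunJDown, hi, if_false]
    ring

theorem improved_estimation_jeffreys_general
    (d : ℕ) (r : ℝ) (hr : 0 < r)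
    (f : (Fin d → ℝ) → ℝ) (hf_nonneg : ∀ θ, 0 ≤ f θ)
    -- for every r > 0 and z, F(z,r) is finite
    (hfin : ∀ r' : ℝ, 0 < r' → ∀ z : Fin d → ℕ,
      IntegrableOn (FintegrandJ f z r') (posOrthant d))
    -- for every r > 0, z ↦ F(z,r) is not constant
    (hnotconst : ∀ r' : ℝ, 0 < r' →
      ∃ z₁ z₂ : Fin d → ℕ, FfunJ f z₁ r' ≠ FfunJ f z₂ r')
    -- the key inequality
    (hineq : ∀ (z : Fin d → ℕ) (r' : ℝ), 0 < r' →
      0 ≤ ∑ i, (z i : ℝ) * (FfunJ f z r' - FfunJDown f z r' i) +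
          ∑ i, ((z i : ℝ) + 1/2) *
            (FfunJ f z r' - FfunJ f (Function.update z i (z i + 1)) r'))
    (lam : Fin d → ℝ) (hlam : lam ∈ posOrthant d) :
    estRisk r lam (fun x i => ((x i : ℝ) + 1/2) / r *
        (FfunJ f (Function.update x i (x i + 1)) r / FfunJ f x r))
    < estRisk r lam (fun x i => ((x i : ℝ) + 1/2) / r) := by
  have hG := FfunJ_pos hf_nonneg hr (hfin r hr) (hnotconst r hr)
  have hgen (z : Fin d → ℕ) : birthDeathGenerator (fun z => FfunJ f z r) z ≤ 0 :=
    neg_nonneg.1 (sum_FfunJDown_add_sum_eq_neg_birthDeathGenerator f r z ▸ hineq z r hr)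
  calc _ = klRisk (fun i => r * lam i) (ratioMean fun z => FfunJ f z r) := by
        rw [← estRisk_div_eq_klRisk hr.ne']
        simp only [ratioMean, div_mul_eq_mul_div]
    _ < klRisk (fun i => r * lam i) fun x i => (x i : ℝ) + 1 / 2 :=
        klRisk_ratioMean_lt_jeffreys (fun i => mul_pos hr (hlam i)) hG hgen (hnotconst r hr)
    _ = _ := (estRisk_div_eq_klRisk hr.ne' lam _).symm

theorem improved_estimation_jeffreys
    (d : ℕ) (hd : 1 ≤ d) (r : ℝ) (hr : 0 < r)
    (f : (Fin d → ℝ) → ℝ) (hf_nonneg : ∀ θ, 0 ≤ f θ)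
    -- for every r > 0 and z, F(z,r) is finite
    (hfin : ∀ r' : ℝ, 0 < r' → ∀ z : Fin d → ℕ,
      IntegrableOn (FintegrandJ f z r') (posOrthant d))
    -- for every r > 0, z ↦ F(z,r) is not constant
    (hnotconst : ∀ r' : ℝ, 0 < r' →
      ∃ z₁ z₂ : Fin d → ℕ, FfunJ f z₁ r' ≠ FfunJ f z₂ r')
    -- the key inequality
    (hineq : ∀ (z : Fin d → ℕ) (r' : ℝ), 0 < r' →
      0 ≤ ∑ i, (z i : ℝ) * (FfunJ f z r' - FfunJDown f z r' i) +
          ∑ i, ((z i : ℝ) + 1/2) *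
            (FfunJ f z r' - FfunJ f (Function.update z i (z i + 1)) r'))
    (lam : Fin d → ℝ) (hlam : lam ∈ posOrthant d) :
    estRisk r lam (fun x i => ((x i : ℝ) + 1/2) / r *
        (FfunJ f (Function.update x i (x i + 1)) r / FfunJ f x r))
    < estRisk r lam (fun x i => ((x i : ℝ) + 1/2) / r) :=
  improved_estimation_jeffreys_general d r hr f hf_nonneg hfin hnotconst hineq lam hlam
end
end

section
/- Define g(λ) = Σ_{x=0}^∞ log((x+1.5)/(x+0.5)) · e^{−λ}λ^x/x! − 1/λ for λ > 0. Then for every λ > 0, 0.09·e^{−λ} − e^{−λ}/λ < g(λ) < 0.06·e^{−λ} − e^{−λ}/λ + 0.26/λ³. -/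
/-!
Write `L x = log ((x + 3/2) / (x + 1/2))`. With `s = 1 / (2 (x + 1))` this is
`log ((1 + s) / (1 - s)) = 2 s + 2 s³/3 + 2 s⁵/5 + ⋯`, whose first term is `1 / (x + 1)`.
Truncating the series from below and bounding its tail by a geometric series gives
`1 / (x + 1) ≤ L x ≤ 1 / (x + 1) + 0.26 / ((x + 1) (x + 2) (x + 3))` for `x ≥ 1`, while
`L 0 = log 3 ∈ [1 + 23/240, 1.1]`. The Poisson expectations of `1 / (x + 1)` and
`1 / ((x + 1) (x + 2) (x + 3))` are tails of the exponential series,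
`(1 - e^{-λ}) / λ` and `(1 - e^{-λ} (1 + λ + λ²/2)) / λ³`, and the two bounds on `g` follow.
-/

open Real
open scoped Nat

section ArtanhSeries

variable {s : ℝ}

lemma log_one_add_sub_log_one_sub_ge (h0 : 0 ≤ s) (h1 : s < 1) :
    2 * s + 2 * s ^ 3 / 3 + 2 * s ^ 5 / 5 ≤ log (1 + s) - log (1 - s) := by
  have := sum_le_hasSum (Finset.range 3) (fun k _ => by positivity)
    (hasSum_log_sub_log_of_abs_lt_one (abs_lt.2 ⟨by linarith, h1⟩))
  norm_num [Finset.sum_range_succ] at this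
  linarith

lemma log_one_add_sub_log_one_sub_le (h0 : 0 ≤ s) (h1 : s < 1) :
    log (1 + s) - log (1 - s) ≤ 2 * s + 2 * s ^ 3 / 3 + 2 * s ^ 5 / (5 * (1 - s ^ 2)) := by
  have hs2 : s ^ 2 < 1 := by nlinarith
  have htail := (hasSum_nat_add_iff' 2).2
    (hasSum_log_sub_log_of_abs_lt_one (abs_lt.2 ⟨by linarith, h1⟩))
  have hgeom := (hasSum_geometric_of_lt_one (sq_nonneg s) hs2).mul_left (2 * s ^ 5 / 5)
  have := hasSum_le (fun k => ?_) htail hgeom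
  · norm_num [Finset.sum_range_succ] at this
    have hrw : 2 * s ^ 5 / (5 * (1 - s ^ 2)) = 2 * s ^ 5 / 5 * (1 - s ^ 2)⁻¹ := by
      rw [← div_div, div_eq_mul_inv]
    linarith
  · calc 2 * (1 / (2 * ((k + 2 : ℕ) : ℝ) + 1)) * s ^ (2 * (k + 2) + 1)
        ≤ 2 * (1 / 5) * (s ^ 5 * (s ^ 2) ^ k) := by
          rw [show s ^ (2 * (k + 2) + 1) = s ^ 5 * (s ^ 2) ^ k by ring]
          gcongr
          push_cast
          linarith [k.cast_nonneg (α := ℝ)]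
      _ = 2 * s ^ 5 / 5 * (s ^ 2) ^ k := by ring

end ArtanhSeries

/-- Equality holds at `u = 2` (the term `x = 1`, with `u = x + 1`): this is where the constant
`0.26` comes from. -/
lemma artanh_upper_bound_inv_two_mul_le {u : ℝ} (hu : 2 ≤ u) :
    2 * (1 / (2 * u)) + 2 * (1 / (2 * u)) ^ 3 / 3 +
        2 * (1 / (2 * u)) ^ 5 / (5 * (1 - (1 / (2 * u)) ^ 2)) ≤
      1 / u + 0.26 / (u * (u + 1) * (u + 2)) := by
  have h4u : 0 < 4 * u ^ 2 - 1 := by nlinarith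
  have key : 1 / u + 0.26 / (u * (u + 1) * (u + 2)) -
      (2 * (1 / (2 * u)) + 2 * (1 / (2 * u)) ^ 3 / 3 +
        2 * (1 / (2 * u)) ^ 5 / (5 * (1 - (1 / (2 * u)) ^ 2))) =
      (u - 2) * (212 * u ^ 3 + 124 * u ^ 2 - 20 * u - 10) /
        (300 * u ^ 3 * (4 * u ^ 2 - 1) * (u + 1) * (u + 2)) := by
    have : 1 - (1 / (2 * u)) ^ 2 = (4 * u ^ 2 - 1) / (4 * u ^ 2) := by
      field_simp
      ring
    rw [this]
    have : u ^ 2 * 4 - 1 ≠ 0 := by linarith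
    field_simp
    ring
  rw [← sub_nonneg, key]
  apply div_nonneg
  · apply mul_nonneg (by linarith)
    nlinarith
  · have : 0 < u := by linarith
    positivity

section LogRatio

variable (x : ℕ)

lemma one_div_two_mul_add_one_lt_one : 1 / (2 * ((x : ℝ) + 1)) < 1 := by
  rw [div_lt_one (by positivity)]
  linarith [x.cast_nonneg (α := ℝ)]

lemma log_ratio_eq :
    log ((x + 1.5) / (x + 0.5)) = log (1 + 1 / (2 * (x + 1))) - log (1 - 1 / (2 * (x + 1))) := by
  have hs := one_div_two_mul_add_one_lt_one x
  rw [← log_div (by positivity) (by linarith)]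
  congr 1
  rw [div_eq_div_iff (by positivity) (by linarith)]
  field_simp
  ring

lemma log_ratio_ge :
    1 / (x + 1) + (if x = 0 then 23 / 240 else 0) ≤ log ((x + 1.5) / (x + 0.5)) := by
  have h := log_one_add_sub_log_one_sub_ge (by positivity) (one_div_two_mul_add_one_lt_one x)
  rw [log_ratio_eq]
  rcases eq_or_ne x 0 with rfl | hx0
  · norm_num at h ⊢
    linarith
  · have hs0 : (0 : ℝ) ≤ 1 / (2 * (x + 1)) := by positivity
    have h2s : 2 * (1 / (2 * ((x : ℝ) + 1))) = 1 / (x + 1) := by field_simp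
    rw [if_neg hx0]
    linarith [pow_nonneg hs0 3, pow_nonneg hs0 5]

lemma log_ratio_le :
    log ((x + 1.5) / (x + 0.5)) ≤
      1 / (x + 1) + 0.26 / ((x + 1) * (x + 2) * (x + 3)) + (if x = 0 then 17 / 300 else 0) := by
  have h := log_one_add_sub_log_one_sub_le (by positivity) (one_div_two_mul_add_one_lt_one x)
  rw [log_ratio_eq]
  refine h.trans ?_
  rcases eq_or_ne x 0 with rfl | hx0
  · norm_num
  · have h' := artanh_upper_bound_inv_two_mul_le (u := x + 1) (by
      have : (1 : ℝ) ≤ x := by exact_mod_cast Nat.one_le_iff_ne_zero.2 hx0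
      linarith)
    rw [show (x : ℝ) + 1 + 1 = x + 2 by ring, show (x : ℝ) + 1 + 2 = x + 3 by ring] at h'
    rwa [if_neg hx0, add_zero]

end LogRatio

section PoissonMoments

variable {lam : ℝ}

lemma hasSum_pow_div_factorial_add (hlam : lam ≠ 0) (k : ℕ) :
    HasSum (fun n : ℕ => lam ^ n / (n + k)!)
      ((exp lam - ∑ i ∈ Finset.range k, lam ^ i / i !) / lam ^ k) := by
  have h := (hasSum_nat_add_iff' k).2 (NormedSpace.expSeries_div_hasSum_exp lam)
  rw [← exp_eq_exp_ℝ] at h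
  have e : (fun n : ℕ => lam ^ n / (n + k)!) = fun n => lam ^ (n + k) / (n + k)! / lam ^ k := by
    funext n
    rw [pow_add]
    field_simp
  rw [e]
  exact h.div_const _

lemma hasSum_poisson_div_succ (hlam : lam ≠ 0) :
    HasSum (fun n : ℕ => 1 / (n + 1) * (exp (-lam) * lam ^ n / n !))
      ((1 - exp (-lam)) / lam) := by
  have e : (fun n : ℕ => 1 / (n + 1) * (exp (-lam) * lam ^ n / n !)) =
      fun n => exp (-lam) * (lam ^ n / (n + 1)!) := by
    funext n
    push_cast [Nat.factorial_succ]
    field_simp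
  have v : (1 - exp (-lam)) / lam =
      exp (-lam) * ((exp lam - ∑ i ∈ Finset.range 1, lam ^ i / i !) / lam ^ 1) := by
    simp only [Finset.sum_range_one, exp_neg]
    field_simp
    norm_num
  rw [e, v]
  exact (hasSum_pow_div_factorial_add hlam 1).mul_left _

lemma hasSum_poisson_div_succ_mul_succ_mul_succ (hlam : lam ≠ 0) :
    HasSum (fun n : ℕ => 1 / ((n + 1) * (n + 2) * (n + 3)) * (exp (-lam) * lam ^ n / n !))
      ((1 - exp (-lam) * (1 + lam + lam ^ 2 / 2)) / lam ^ 3) := by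
  have e : (fun n : ℕ => 1 / ((n + 1) * (n + 2) * (n + 3)) * (exp (-lam) * lam ^ n / n !)) =
      fun n => exp (-lam) * (lam ^ n / (n + 3)!) := by
    funext n
    push_cast [Nat.factorial_succ]
    field_simp
    ring
  have v : (1 - exp (-lam) * (1 + lam + lam ^ 2 / 2)) / lam ^ 3 =
      exp (-lam) * ((exp lam - ∑ i ∈ Finset.range 3, lam ^ i / i !) / lam ^ 3) := by
    simp only [Finset.sum_range_succ, exp_neg]
    field_simp
    norm_num
    ring
  rw [e, v]
  exact (hasSum_pow_div_factorial_add hlam 3).mul_left _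

end PoissonMoments

lemma hasSum_ite_eq_zero_mul {α : Type*} [NonUnitalNonAssocSemiring α] [TopologicalSpace α]
    (c : α) (f : ℕ → α) : HasSum (fun x => (if x = 0 then c else 0) * f x) (c * f 0) := by
  simpa using hasSum_single (f := fun x => (if x = 0 then c else 0) * f x) 0
    (fun x hx => by simp [hx])

theorem g_function_bounds (lam : ℝ) (hlam : 0 < lam) :
    (0.09 * Real.exp (-lam) - Real.exp (-lam) / lam <
      (∑' x : ℕ, Real.log (((x : ℝ) + 1.5) / ((x : ℝ) + 0.5)) *
          (Real.exp (-lam) * lam ^ x / (Nat.factorial x))) - 1 / lam) ∧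
    ((∑' x : ℕ, Real.log (((x : ℝ) + 1.5) / ((x : ℝ) + 0.5)) *
          (Real.exp (-lam) * lam ^ x / (Nat.factorial x))) - 1 / lam <
      0.06 * Real.exp (-lam) - Real.exp (-lam) / lam + 0.26 / lam ^ 3) := by
  set q := exp (-lam)
  set p : ℕ → ℝ := fun x => q * lam ^ x / (x ! : ℝ)
  have hp : ∀ x, 0 ≤ p x := fun x => by positivity
  have hp0 : p 0 = q := by simp [p]
  have hlower := (hasSum_poisson_div_succ hlam.ne').add (hasSum_ite_eq_zero_mul (23 / 240) p)
  have hupper := ((hasSum_poisson_div_succ hlam.ne').add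
    ((hasSum_poisson_div_succ_mul_succ_mul_succ hlam.ne').mul_left 0.26)).add
      (hasSum_ite_eq_zero_mul (17 / 300) p)
  have hsummable : Summable fun x : ℕ => log ((x + 1.5) / (x + 0.5)) * p x :=
    hupper.summable.of_nonneg_of_le
      (fun x => mul_nonneg (log_nonneg ((one_le_div (by positivity)).2 (by linarith))) (hp x))
      (fun x => (mul_le_mul_of_nonneg_right (log_ratio_le x) (hp x)).trans_eq (by ring))
  have hge := hasSum_le
    (fun x => (mul_le_mul_of_nonneg_right (log_ratio_ge x) (hp x)).trans_eq' (by ring))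
    hlower hsummable.hasSum
  have hle := hasSum_le
    (fun x => (mul_le_mul_of_nonneg_right (log_ratio_le x) (hp x)).trans_eq (by ring))
    hsummable.hasSum hupper
  -- strictness comes from `0.09 < 23/240`, `17/300 < 0.06` and `hrem`
  have hrem : 0 < q * (1 + lam + lam ^ 2 / 2) / lam ^ 3 := by positivity
  have hsplit : 0.26 * ((1 - q * (1 + lam + lam ^ 2 / 2)) / lam ^ 3) =
      0.26 / lam ^ 3 - 0.26 * (q * (1 + lam + lam ^ 2 / 2) / lam ^ 3) := by ring
  have hq : 0 < q := exp_pos _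
  constructor <;> linarith [sub_div 1 q lam]
end
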